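/- For general p > 1, Q_p^{(p+1)/2} is an eigenfunction of the linearized operator L u = -u'' + u - p Q_p^{p-1} u with eigenvalue 1 - ((p+1)/2)²; that is, L(Q_p^{(p+1)/2}) = (1 - ((p+1)/2)²) Q_p^{(p+1)/2}. -/

import Mathlib

/-!
Writing `k = (p - 1) / 2`, one has `Q_p^r = ((p + 1) / 2)^(r/(p-1)) · cosh(k x)^(-2r/(p-1))`.
For any exponent `a`, `(cosh(k x)^a)'' = k² a (a cosh(k x)^a - (a - 1) cosh(k x)^(a-2))`. For `r = (p + 1) / 2` we get
`k a = -(p + 1) / 2` and `k² a (a - 1) = p (p + 1) / 2`, and the `cosh^(a-2)` term is exactly cancelled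
by the potential `p Q_p^(p-1) = p (p + 1) / 2 · cosh(k x)^(-2)`, leaving `(1 - (k a)²) Q_p^r`.
-/

noncomputable def sech (x : ℝ) : ℝ := 2 / (Real.exp x + Real.exp (-x))

noncomputable def Qp (p : ℝ) (x : ℝ) : ℝ :=
  ((p + 1) / 2) ^ (1 / (p - 1)) * sech ((p - 1) * x / 2) ^ (2 / (p - 1))

/-- The linearized operator `L u = -u'' + u - p Q_p^{p-1} u`. -/
noncomputable def Lp (p : ℝ) (u : ℝ → ℝ) (x : ℝ) : ℝ :=
  -(deriv (deriv u) x) + u x - p * Qp p x ^ (p - 1) * u x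

open Real

lemma sech_eq_inv_cosh (x : ℝ) : sech x = (cosh x)⁻¹ := by
  rw [sech, cosh_eq, inv_div]

lemma hasDerivAt_sinh_const_mul (k x : ℝ) :
    HasDerivAt (fun y => sinh (k * y)) (k * cosh (k * x)) x := by
  simpa [mul_comm] using ((hasDerivAt_id x).const_mul k).sinh

lemma hasDerivAt_cosh_const_mul_rpow (k a x : ℝ) :
    HasDerivAt (fun y => cosh (k * y) ^ a) (a * k * sinh (k * x) * cosh (k * x) ^ (a - 1)) x := by
  have hcosh : HasDerivAt (fun y => cosh (k * y)) (k * sinh (k * x)) x := by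
    simpa [mul_comm] using ((hasDerivAt_id x).const_mul k).cosh
  convert hcosh.rpow_const (p := a) (Or.inl (cosh_pos (k * x)).ne') using 1
  ring

lemma deriv_deriv_cosh_const_mul_rpow (k a x : ℝ) :
    deriv (deriv fun y => cosh (k * y) ^ a) x =
      k ^ 2 * a * (a * cosh (k * x) ^ a - (a - 1) * cosh (k * x) ^ (a - 2)) := by
  have hderiv : deriv (fun y => cosh (k * y) ^ a) =
      fun y => a * k * sinh (k * y) * cosh (k * y) ^ (a - 1) :=
    funext fun y => (hasDerivAt_cosh_const_mul_rpow k a y).deriv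
  have h := ((hasDerivAt_sinh_const_mul k x).const_mul (a * k)).fun_mul
    (hasDerivAt_cosh_const_mul_rpow k (a - 1) x)
  rw [hderiv, h.deriv]
  have hc : cosh (k * x) ≠ 0 := (cosh_pos _).ne'
  rw [sub_sub, one_add_one_eq_two, rpow_sub_one hc, rpow_sub (cosh_pos _), rpow_two]
  field_simp
  linear_combination a * k ^ 2 * (a - 1) * sinh_sq (k * x)

theorem Qp_rpow (p : ℝ) (hp : -1 ≤ p) (r x : ℝ) :
    Qp p x ^ r =
      ((p + 1) / 2) ^ (r / (p - 1)) * cosh ((p - 1) / 2 * x) ^ (-(2 * r / (p - 1))) := by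
  have hc : (0 : ℝ) ≤ (p + 1) / 2 := by linarith
  have hcosh := (cosh_pos ((p - 1) / 2 * x)).le
  rw [Qp, sech_eq_inv_cosh, show (p - 1) * x / 2 = (p - 1) / 2 * x by ring, inv_rpow hcosh,
    ← rpow_neg hcosh, mul_rpow (rpow_nonneg hc _) (rpow_nonneg hcosh _), ← rpow_mul hc,
    ← rpow_mul hcosh]
  congr 2 <;> ring

/-- `Q_p^{(p+1)/2}` is an eigenfunction of `L` with eigenvalue `1 - ((p+1)/2)²`. -/
theorem Lp_groundstate (p : ℝ) (hp : 1 < p) (x : ℝ) :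
    Lp p (fun y => Qp p y ^ ((p + 1) / 2)) x =
      (1 - ((p + 1) / 2) ^ 2) * Qp p x ^ ((p + 1) / 2) := by
  have hp1 : p - 1 ≠ 0 := by linarith
  have hp' : -1 ≤ p := by linarith
  have hc := cosh_pos ((p - 1) / 2 * x)
  have hpot : Qp p x ^ (p - 1) = (p + 1) / 2 / cosh ((p - 1) / 2 * x) ^ 2 := by
    rw [Qp_rpow p hp', div_self hp1, mul_div_assoc, div_self hp1, rpow_one, mul_one,
      rpow_neg hc.le, rpow_two, ← div_eq_mul_inv]
  rw [Lp, funext (Qp_rpow p hp' ((p + 1) / 2)), deriv_const_mul_field', deriv_const_mul_field,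
    deriv_deriv_cosh_const_mul_rpow, hpot, Qp_rpow p hp', rpow_sub hc, rpow_two]
  field_simp
  ring
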